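/- Let δ > 0 and σ ≥ 1. Then lim_{λ→+∞} λ^σ (e^{−x₂(λ)/x₁(λ)} − e^{−1})/(x₁(λ) − x₂(λ)) = (1 − e^{−1})/(2δ); that is, with τ_λ := 1/x₁(λ), one has lim_{λ→+∞} λ^σ u_λ'(τ_λ) = (1 − e^{−1})/(2δ), and in particular this limit is finite and positive. -/

import Mathlib

open Filter

/-- `x₁(λ) = δλ^σ + (δ²λ^{2σ} − λ)^{1/2}`, minus the smaller root of
`x² + 2δλ^σ x + λ` in the supercritical regime. -/
noncomputable def x1 (δ σ lam : ℝ) : ℝ :=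
  δ * lam ^ σ + (δ ^ 2 * lam ^ (2 * σ) - lam) ^ ((1 : ℝ) / 2)

/-- `x₂(λ) = δλ^σ − (δ²λ^{2σ} − λ)^{1/2}`, minus the larger root of
`x² + 2δλ^σ x + λ` in the supercritical regime. -/
noncomputable def x2 (δ σ lam : ℝ) : ℝ :=
  δ * lam ^ σ - (δ ^ 2 * lam ^ (2 * σ) - lam) ^ ((1 : ℝ) / 2)

/-- The solution of `u'' + 2δλ^σ u' + λu = 1`, `u(0) = u'(0) = 0`. -/
noncomputable def uSol (δ σ lam t : ℝ) : ℝ :=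
  1 / lam + (x2 δ σ lam * Real.exp (-(x1 δ σ lam) * t)
    - x1 δ σ lam * Real.exp (-(x2 δ σ lam) * t)) / (lam * (x1 δ σ lam - x2 δ σ lam))

/-- The derivative of the above solution. -/
noncomputable def uDer (δ σ lam t : ℝ) : ℝ :=
  (Real.exp (-(x2 δ σ lam) * t) - Real.exp (-(x1 δ σ lam) * t))
    / (x1 δ σ lam - x2 δ σ lam)

/-! With `s(λ) = √(δ²λ^{2σ} − λ)` one has `x₁ − x₂ = 2s` and `s/λ^σ = √(δ² − λ^{1−2σ}) → δ`
since `σ > 1/2`. Hence `λ^σ/(x₁ − x₂) → 1/(2δ)` and `x₂/x₁ = (δ − s/λ^σ)/(δ + s/λ^σ) → 0`, so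
`e^{−x₂/x₁} − e^{−1} → 1 − e^{−1}`. At `τ = 1/x₁` the exponent `−x₁τ` is exactly `−1`, so the
second limit is the first one. -/

open Topology Real

lemma x1_eq (δ σ lam : ℝ) : x1 δ σ lam = δ * lam ^ σ + √(δ ^ 2 * lam ^ (2 * σ) - lam) := by
  rw [x1, sqrt_eq_rpow]

lemma x2_eq (δ σ lam : ℝ) : x2 δ σ lam = δ * lam ^ σ - √(δ ^ 2 * lam ^ (2 * σ) - lam) := by
  rw [x2, sqrt_eq_rpow]

lemma x1_sub_x2 (δ σ lam : ℝ) :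
    x1 δ σ lam - x2 δ σ lam = 2 * √(δ ^ 2 * lam ^ (2 * σ) - lam) := by
  rw [x1_eq, x2_eq]; ring

section Roots

variable {δ σ : ℝ}

lemma x1_pos (hδ : 0 < δ) {lam : ℝ} (hlam : 0 < lam) : 0 < x1 δ σ lam := by
  rw [x1_eq]; positivity

lemma sqrt_discriminant_div_rpow {lam : ℝ} (hlam : 0 < lam) :
    √(δ ^ 2 * lam ^ (2 * σ) - lam) / lam ^ σ = √(δ ^ 2 - lam ^ (1 - 2 * σ)) := by
  have hsq : lam ^ (2 * σ) = (lam ^ σ) ^ 2 := by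
    rw [mul_comm, ← rpow_mul_natCast hlam.le]; norm_num
  have hquot : lam / lam ^ (2 * σ) = lam ^ (1 - 2 * σ) := by
    rw [rpow_sub hlam, rpow_one]
  have hpos : 0 < lam ^ (2 * σ) := by positivity
  rw [← sqrt_sq (rpow_nonneg hlam.le σ), ← hsq, ← sqrt_div' _ hpos.le, sub_div,
    mul_div_cancel_right₀ _ hpos.ne', hquot]

lemma tendsto_sqrt_discriminant_div_rpow (hσ : 1 / 2 < σ) :
    Tendsto (fun lam : ℝ => √(δ ^ 2 * lam ^ (2 * σ) - lam) / lam ^ σ) atTop (𝓝 |δ|) := by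
  have hvanish : Tendsto (fun lam : ℝ => lam ^ (1 - 2 * σ)) atTop (𝓝 0) := by
    simpa [neg_sub] using tendsto_rpow_neg_atTop (y := 2 * σ - 1) (by linarith)
  have hlim : Tendsto (fun lam : ℝ => √(δ ^ 2 - lam ^ (1 - 2 * σ))) atTop (𝓝 |δ|) := by
    have h := ((tendsto_const_nhds (x := δ ^ 2)).sub hvanish).sqrt
    rwa [sub_zero, sqrt_sq_eq_abs] at h
  refine hlim.congr' ?_
  filter_upwards [eventually_gt_atTop 0] with lam hlam
  exact (sqrt_discriminant_div_rpow hlam).symm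

lemma tendsto_rpow_div_x1_sub_x2 (hδ : 0 < δ) (hσ : 1 / 2 < σ) :
    Tendsto (fun lam : ℝ => lam ^ σ / (x1 δ σ lam - x2 δ σ lam)) atTop (𝓝 (1 / (2 * δ))) := by
  have h := ((tendsto_sqrt_discriminant_div_rpow (δ := δ) hσ).const_mul 2).inv₀
    (by rw [abs_of_pos hδ]; positivity)
  rw [abs_of_pos hδ, ← one_div] at h
  refine h.congr fun lam => ?_
  rw [x1_sub_x2, mul_div_assoc', inv_div]

lemma tendsto_x2_div_x1 (hδ : 0 < δ) (hσ : 1 / 2 < σ) :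
    Tendsto (fun lam : ℝ => x2 δ σ lam / x1 δ σ lam) atTop (𝓝 0) := by
  have hw := tendsto_sqrt_discriminant_div_rpow (δ := δ) hσ
  rw [abs_of_pos hδ] at hw
  have h := ((tendsto_const_nhds (x := δ)).sub hw).div
    ((tendsto_const_nhds (x := δ)).add hw) (by positivity)
  rw [sub_self, zero_div] at h
  refine h.congr' ?_
  filter_upwards [eventually_gt_atTop 0] with lam hlam
  rw [Pi.div_apply, x1_eq, x2_eq, ← mul_div_mul_right _ _ (rpow_pos_of_pos hlam σ).ne',
    sub_mul, add_mul, div_mul_cancel₀ _ (rpow_pos_of_pos hlam σ).ne']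

end Roots

lemma uDer_one_div_x1 {δ σ lam : ℝ} (h : x1 δ σ lam ≠ 0) :
    uDer δ σ lam (1 / x1 δ σ lam)
      = (exp (-(x2 δ σ lam) / x1 δ σ lam) - exp (-1)) / (x1 δ σ lam - x2 δ σ lam) := by
  rw [uDer, mul_one_div, mul_one_div, neg_div_self h]

/-- for `δ > 0` and `σ ≥ 1`,
`λ^σ (e^{−x₂(λ)/x₁(λ)} − e^{−1})/(x₁(λ) − x₂(λ)) → (1 − e^{−1})/(2δ)`, i.e. with
`τ_λ := 1/x₁(λ)` one has `λ^σ u_λ'(τ_λ) → (1 − e^{−1})/(2δ)`, a finite positive limit. -/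
theorem derivative_blowup_pair (δ σ : ℝ) (hδ : 0 < δ) (hσ : 1 ≤ σ) :
    Tendsto (fun lam : ℝ =>
        lam ^ σ * (Real.exp (-(x2 δ σ lam) / x1 δ σ lam) - Real.exp (-1))
          / (x1 δ σ lam - x2 δ σ lam)) atTop
      (nhds ((1 - Real.exp (-1)) / (2 * δ))) ∧
    Tendsto (fun lam : ℝ => lam ^ σ * uDer δ σ lam (1 / x1 δ σ lam)) atTop
      (nhds ((1 - Real.exp (-1)) / (2 * δ))) ∧
    0 < (1 - Real.exp (-1)) / (2 * δ) := by
  have hσ' : 1 / 2 < σ := by linarith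
  have hexp : Tendsto (fun lam : ℝ => exp (-(x2 δ σ lam) / x1 δ σ lam) - exp (-1))
      atTop (𝓝 (1 - exp (-1))) := by
    simpa [neg_div] using ((tendsto_x2_div_x1 hδ hσ').neg.rexp).sub_const (exp (-1))
  have hmain := (tendsto_rpow_div_x1_sub_x2 hδ hσ').mul hexp
  rw [one_div_mul_eq_div] at hmain
  have hfirst := hmain.congr fun lam => (mul_div_right_comm _ _ _).symm
  refine ⟨hfirst, hfirst.congr' ?_, div_pos (by simp) (by positivity)⟩
  filter_upwards [eventually_gt_atTop 0] with lam hlam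
  rw [uDer_one_div_x1 (x1_pos hδ hlam).ne', mul_div_assoc]
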